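/- arXiv:1309.0604 — 5 statements merged into one kernel-verified Lean document; each statement's English description precedes it below -/
import Mathlib

section
/- For integer k ≥ 1, real c ≥ 0 and x ≥ 0, the sum Σ_{i=1}^k Γ(i+c, x)/Γ(i) equals (Γ(k+c+1, x) - x^(c+1) Γ(k, x)) / ((c+1) Γ(k)), where Γ(i) = (i-1)! and Γ(·,·) is the upper incomplete Gamma function. -/
open Real MeasureTheory Set Finset

/-!
Integrating by parts gives `Γ(s + 1, x) = s Γ(s, x) + x ^ s e^(-x)`. Hence
`G a := Γ(a + c + 1, x) - x ^ (c + 1) Γ(a, x)` obeys `G (a + 1) = a G a + (c + 1) Γ(a + c + 1, x)`,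
the boundary terms cancelling, so `G k / (k - 1)!` grows by `(c + 1) Γ(k + c + 1, x) / k!` from `k`
to `k + 1`, and telescoping from `G 1 = (c + 1) Γ(c + 1, x)` gives the sum.
-/

/-- Upper incomplete Gamma function `Γ(s, x) = ∫_x^∞ z^(s-1) e^(-z) dz`. -/
noncomputable def uGamma (s x : ℝ) : ℝ := ∫ z in Set.Ioi x, z ^ (s - 1) * Real.exp (-z)

lemma integrableOn_rpow_mul_exp_neg_Ioi {s x : ℝ} (hs : 0 < s) (hx : 0 ≤ x) :
    IntegrableOn (fun z : ℝ => z ^ (s - 1) * exp (-z)) (Ioi x) := by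
  simpa only [mul_comm] using (GammaIntegral_convergent hs).mono_set (Ioi_subset_Ioi hx)

lemma uGamma_add_one {s x : ℝ} (hs : 0 ≤ s) (hx : 0 ≤ x) :
    uGamma (s + 1) x = s * uGamma s x + x ^ s * exp (-x) := by
  rcases hs.eq_or_lt with rfl | hs
  · simp [uGamma, integral_exp_Iic]
  have hderiv : ∀ z ∈ Ioi x, HasDerivAt (fun z => -(z ^ s * exp (-z)))
      (z ^ (s + 1 - 1) * exp (-z) - s * (z ^ (s - 1) * exp (-z))) z := by
    intro z hz
    have hpow := hasDerivAt_rpow_const (p := s) (Or.inl (hx.trans_lt hz).ne')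
    refine (hpow.mul (hasDerivAt_neg z).exp).neg.congr_deriv ?_
    rw [add_sub_cancel_right]
    ring
  have hcont : ContinuousWithinAt (fun z => -(z ^ s * exp (-z))) (Ici x) x :=
    (((continuousAt_rpow_const _ _ (Or.inr hs.le)).mul
      (continuous_exp.comp continuous_neg).continuousAt).neg).continuousWithinAt
  have hlim : Filter.Tendsto (fun z => -(z ^ s * exp (-z))) Filter.atTop (nhds 0) := by
    simpa using (tendsto_rpow_mul_exp_neg_mul_atTop_nhds_zero s 1 one_pos).neg
  have hint := integrableOn_rpow_mul_exp_neg_Ioi hs hx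
  have key := integral_Ioi_of_hasDerivAt_of_tendsto hcont hderiv
    ((integrableOn_rpow_mul_exp_neg_Ioi (by linarith) hx).sub (hint.const_mul s)) hlim
  rw [integral_sub (integrableOn_rpow_mul_exp_neg_Ioi (by linarith) hx) (hint.const_mul s),
    integral_const_mul] at key
  rw [uGamma, uGamma]
  linarith

lemma uGamma_add_one_add_sub_rpow_mul {a b x : ℝ} (ha : 0 ≤ a) (hb : 0 < b) (hx : 0 ≤ x) :
    uGamma (a + 1 + b) x - x ^ b * uGamma (a + 1) x
      = a * (uGamma (a + b) x - x ^ b * uGamma a x) + b * uGamma (a + b) x := by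
  rw [show a + 1 + b = a + b + 1 by ring, uGamma_add_one (by positivity) hx, uGamma_add_one ha hx,
    rpow_add' hx (by positivity), add_comm a b]
  ring

theorem stmt2 (k : ℕ) (hk : 1 ≤ k) (c x : ℝ) (hc : 0 ≤ c) (hx : 0 ≤ x) :
    ∑ i ∈ Finset.Icc 1 k, uGamma ((i : ℝ) + c) x / (Nat.factorial (i - 1) : ℝ)
      = (uGamma ((k : ℝ) + c + 1) x - x ^ (c + 1) * uGamma k x)
          / ((c + 1) * (Nat.factorial (k - 1) : ℝ)) := by
  have hc1 : 0 < c + 1 := by linarith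
  induction k, hk using Nat.le_induction with
  | base =>
    have h := uGamma_add_one_add_sub_rpow_mul le_rfl hc1 hx
    simp only [Finset.Icc_self, sum_singleton, Nat.sub_self, Nat.factorial_zero, Nat.cast_one,
      div_one, mul_one]
    field_simp
    ring_nf at h ⊢
    linarith
  | succ k hk ih =>
    have h := uGamma_add_one_add_sub_rpow_mul (Nat.cast_nonneg k) hc1 hx
    have hfac : ((k.factorial : ℕ) : ℝ) = k * ((k - 1).factorial : ℝ) := by
      rw [← Nat.mul_factorial_pred (by omega : k ≠ 0)]
      push_cast; ring
    rw [sum_Icc_succ_top (by omega), ih, Nat.add_sub_cancel, hfac]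
    push_cast
    have : (k : ℝ) ≠ 0 := by positivity
    field_simp
    ring_nf at h ⊢
    linarith
end

section
/- Let I^c_1 = 1 and I^c_i = I^c_{i-1} + G_i where G_i are independent geometric random variables on {1,2,...} with parameters g_i = q^(i-1-k), and let I^p_1 = 1 and I^p_i = I^p_{i-1} + G̃_i where G̃_i are independent geometric with parameters g̃_i = (i-1)/k. Then for q ≥ 2 the random vector (I^c_1,...,I^c_k) is less than (I^p_1,...,I^p_k) in the usual multivariate stochastic order; i.e., E[F(I^c)] ≤ E[F(I^p)] for every bounded coordinatewise-increasing F : ℝ^k → ℝ. -/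
/-!
Since `k q^i ≤ i q^k` for `q ≥ 2` and `1 ≤ i ≤ k`, each ratio `g_i` is at most `g̃_i`, so it
suffices that a product of geometric laws is stochastically increasing in each ratio. In one
variable this is Abel summation, `E h(G - 1) = h 0 + ∑ a^(n+1) (h (n+1) - h n)`, whose
terms grow with `a` when `h` is increasing; conditioning on the first increment gives the
multivariate case by induction on the number of coordinates.
-/

open Finset

/-- Index of the `(i+1)`-st contacted cache, given increments `w j + 1` (so each increment is
a positive integer): `I_1 = 1` and `I_i = I_{i-1} + (w_{i-1} + 1)`. -/
noncomputable def cacheIndex (k : ℕ) (w : Fin (k - 1) → ℕ) (i : Fin k) : ℝ :=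
  1 + ∑ j ∈ Finset.univ.filter (fun j : Fin (k - 1) => (j : ℕ) < (i : ℕ)), ((w j : ℝ) + 1)

-- `geomWeight a` is the law of `G - 1` for `G ~ Geometric(a)` on the positive integers, and
-- `prodGeomWeight g` the joint law of independent such variables.
def geomWeight (a : ℝ) (n : ℕ) : ℝ := (1 - a) * a ^ n

def prodGeomWeight {m : ℕ} (g : Fin m → ℝ) (w : Fin m → ℕ) : ℝ := ∏ j, geomWeight (g j) (w j)

section BoundedWeights

variable {ι : Type*} {p H H' : ι → ℝ} {C : ℝ}

lemma summable_mul_of_abs_le (hp0 : ∀ i, 0 ≤ p i) (hp : Summable p) (hH : ∀ i, |H i| ≤ C) :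
    Summable fun i => p i * H i :=
  .of_norm_bounded (hp.mul_right C) fun i => by
    rw [Real.norm_eq_abs, abs_mul, abs_of_nonneg (hp0 i)]
    exact mul_le_mul_of_nonneg_left (hH i) (hp0 i)

lemma abs_tsum_mul_le (hp0 : ∀ i, 0 ≤ p i) (hp : HasSum p 1) (hH : ∀ i, |H i| ≤ C) :
    |∑' i, p i * H i| ≤ C := by
  have hs := summable_mul_of_abs_le hp0 hp.summable hH
  have hsC : HasSum (fun i => p i * C) C := by simpa using hp.mul_right C
  rw [abs_le]
  constructor
  · have hsC' : HasSum (fun i => p i * -C) (-C) := by simpa using hp.mul_right (-C)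
    refine hasSum_le (fun i => ?_) hsC' hs.hasSum
    exact mul_le_mul_of_nonneg_left (neg_le_of_abs_le (hH i)) (hp0 i)
  · exact hasSum_le (fun i => mul_le_mul_of_nonneg_left (le_of_abs_le (hH i)) (hp0 i))
      hs.hasSum hsC

lemma tsum_mul_le_tsum_mul (hp0 : ∀ i, 0 ≤ p i) (hp : Summable p) (hH : ∀ i, |H i| ≤ C)
    (hH' : ∀ i, |H' i| ≤ C) (hle : ∀ i, H i ≤ H' i) :
    ∑' i, p i * H i ≤ ∑' i, p i * H' i :=
  (summable_mul_of_abs_le hp0 hp hH).tsum_le_tsum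
    (fun i => mul_le_mul_of_nonneg_left (hle i) (hp0 i)) (summable_mul_of_abs_le hp0 hp hH')

end BoundedWeights

section Geometric

variable {a b C : ℝ} {h : ℕ → ℝ}

lemma geomWeight_nonneg (h0 : 0 ≤ a) (h1 : a ≤ 1) (n : ℕ) : 0 ≤ geomWeight a n :=
  mul_nonneg (sub_nonneg.2 h1) (pow_nonneg h0 n)

lemma hasSum_geomWeight (h0 : 0 ≤ a) (h1 : a < 1) : HasSum (geomWeight a) 1 := by
  have := (hasSum_geometric_of_lt_one h0 h1).mul_left (1 - a)
  rwa [mul_inv_cancel₀ (sub_ne_zero.2 h1.ne')] at this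

/-- Abel summation against the tail probabilities `a ^ (n + 1) = P(G - 1 > n)`. -/
lemma hasSum_pow_succ_mul_sub (h0 : 0 ≤ a) (h1 : a < 1) (hC : ∀ n, |h n| ≤ C) :
    HasSum (fun n => a ^ (n + 1) * (h (n + 1) - h n)) (∑' n, geomWeight a n * h n - h 0) := by
  obtain ⟨S, hS⟩ := summable_mul_of_abs_le (pow_nonneg h0) (summable_geometric_of_lt_one h0 h1) hC
  have hweight : ∑' n, geomWeight a n * h n = S - a * S := by
    rw [← (hS.sub (hS.mul_left a)).tsum_eq]
    congr with n
    simp only [geomWeight]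
    ring
  have hshift := ((hasSum_nat_add_iff' 1).2 hS).sub (hS.mul_left a)
  rw [sum_range_one, pow_zero, one_mul, sub_right_comm] at hshift
  rw [hweight]
  exact hshift.congr_fun fun n => by ring

lemma tsum_geomWeight_mul_le_of_le (h0 : 0 ≤ a) (hab : a ≤ b) (hb1 : b < 1)
    (hC : ∀ n, |h n| ≤ C) (hh : Monotone h) :
    ∑' n, geomWeight a n * h n ≤ ∑' n, geomWeight b n * h n := by
  have := hasSum_le
    (fun n => mul_le_mul_of_nonneg_right (pow_le_pow_left₀ h0 hab _) (sub_nonneg.2 (hh n.le_succ)))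
    (hasSum_pow_succ_mul_sub h0 (hab.trans_lt hb1) hC) (hasSum_pow_succ_mul_sub (h0.trans hab) hb1 hC)
  linarith

end Geometric

section ProdGeometric

variable {m : ℕ} {C : ℝ}

lemma prodGeomWeight_nonneg {g : Fin m → ℝ} (hg0 : ∀ j, 0 ≤ g j) (hg1 : ∀ j, g j ≤ 1)
    (w : Fin m → ℕ) : 0 ≤ prodGeomWeight g w :=
  prod_nonneg fun j _ => geomWeight_nonneg (hg0 j) (hg1 j) _

lemma prodGeomWeight_cons (g : Fin (m + 1) → ℝ) (n : ℕ) (w : Fin m → ℕ) :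
    prodGeomWeight g (Fin.cons n w) = geomWeight (g 0) n * prodGeomWeight (Fin.tail g) w := by
  simp [prodGeomWeight, Fin.prod_univ_succ, Fin.tail]

lemma hasSum_prodGeomWeight {g : Fin m → ℝ} (hg0 : ∀ j, 0 ≤ g j) (hg1 : ∀ j, g j < 1) :
    HasSum (prodGeomWeight g) 1 := by
  induction m with
  | zero => simpa [prodGeomWeight] using hasSum_fintype (prodGeomWeight g)
  | succ m ih =>
    have htail := ih (fun j => hg0 j.succ) (fun j => hg1 j.succ)
    have hhead := hasSum_geomWeight (hg0 0) (hg1 0)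
    rw [← (Fin.consEquiv fun _ => ℕ).hasSum_iff]
    have hprod := hhead.mul htail <|
      hhead.summable.mul_of_nonneg htail.summable (geomWeight_nonneg (hg0 0) (hg1 0).le)
        (prodGeomWeight_nonneg (fun j => hg0 j.succ) (fun j => (hg1 j.succ).le))
    rw [mul_one] at hprod
    exact hprod.congr_fun fun x => prodGeomWeight_cons g x.1 x.2

lemma tsum_prodGeomWeight_mul_eq_tsum_geomWeight_mul {g : Fin (m + 1) → ℝ}
    (hg0 : ∀ j, 0 ≤ g j) (hg1 : ∀ j, g j < 1) {H : (Fin (m + 1) → ℕ) → ℝ}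
    (hH : ∀ w, |H w| ≤ C) :
    ∑' w, prodGeomWeight g w * H w =
      ∑' n, geomWeight (g 0) n * ∑' w, prodGeomWeight (Fin.tail g) w * H (Fin.cons n w) := by
  have hs : Summable fun x : ℕ × (Fin m → ℕ) =>
      prodGeomWeight g (Fin.cons x.1 x.2) * H (Fin.cons x.1 x.2) :=
    (Fin.consEquiv fun _ => ℕ).summable_iff.2 <|
      summable_mul_of_abs_le (prodGeomWeight_nonneg hg0 fun j => (hg1 j).le)
        (hasSum_prodGeomWeight hg0 hg1).summable hH
  rw [← (Fin.consEquiv fun _ => ℕ).tsum_eq]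
  show ∑' x : ℕ × (Fin m → ℕ), prodGeomWeight g (Fin.cons x.1 x.2) * H (Fin.cons x.1 x.2) = _
  rw [hs.tsum_prod' hs.prod_factor]
  congr with n
  rw [← tsum_mul_left]
  congr with w
  simp [prodGeomWeight_cons, mul_assoc]

end ProdGeometric

theorem tsum_prodGeomWeight_mul_le_of_le {m : ℕ} {g g' : Fin m → ℝ} (hg0 : ∀ j, 0 ≤ g j)
    (hgg' : ∀ j, g j ≤ g' j) (hg'1 : ∀ j, g' j < 1) {H : (Fin m → ℕ) → ℝ} {C : ℝ}
    (hH : ∀ w, |H w| ≤ C) (hmono : Monotone H) :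
    ∑' w, prodGeomWeight g w * H w ≤ ∑' w, prodGeomWeight g' w * H w := by
  induction m with
  | zero => simp [prodGeomWeight]
  | succ m ih =>
    have hg1 j : g j < 1 := (hgg' j).trans_lt (hg'1 j)
    have hg'0 j : 0 ≤ g' j := (hg0 j).trans (hgg' j)
    set inner : (Fin (m + 1) → ℝ) → ℕ → ℝ := fun c n =>
      ∑' w, prodGeomWeight (Fin.tail c) w * H (Fin.cons n w)
    have inner_bdd {c : Fin (m + 1) → ℝ} (hc0 : ∀ j, 0 ≤ c j) (hc1 : ∀ j, c j < 1) n :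
        |inner c n| ≤ C :=
      abs_tsum_mul_le (prodGeomWeight_nonneg (fun j => hc0 j.succ) fun j => (hc1 j.succ).le)
        (hasSum_prodGeomWeight (fun j => hc0 j.succ) fun j => hc1 j.succ) fun _ => hH _
    have inner_mono : Monotone (inner g) := fun n n' hn =>
      tsum_mul_le_tsum_mul (prodGeomWeight_nonneg (fun j => hg0 j.succ) fun j => (hg1 j.succ).le)
        (hasSum_prodGeomWeight (fun j => hg0 j.succ) fun j => hg1 j.succ).summable
        (fun _ => hH _) (fun _ => hH _) fun w => hmono (Fin.cons_le_cons.2 ⟨hn, le_rfl⟩)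
    calc ∑' w, prodGeomWeight g w * H w = ∑' n, geomWeight (g 0) n * inner g n :=
          tsum_prodGeomWeight_mul_eq_tsum_geomWeight_mul hg0 hg1 hH
      _ ≤ ∑' n, geomWeight (g' 0) n * inner g n :=
          tsum_geomWeight_mul_le_of_le (hg0 0) (hgg' 0) (hg'1 0) (inner_bdd hg0 hg1) inner_mono
      _ ≤ ∑' n, geomWeight (g' 0) n * inner g' n :=
          tsum_mul_le_tsum_mul (geomWeight_nonneg (hg'0 0) (hg'1 0).le)
            (hasSum_geomWeight (hg'0 0) (hg'1 0)).summable (inner_bdd hg0 hg1)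
            (inner_bdd hg'0 hg'1) fun n =>
              ih (fun j => hg0 j.succ) (fun j => hgg' j.succ) (fun j => hg'1 j.succ)
                (fun _ => hH _) fun v w hvw => hmono (Fin.cons_le_cons.2 ⟨le_rfl, hvw⟩)
      _ = ∑' w, prodGeomWeight g' w * H w :=
          (tsum_prodGeomWeight_mul_eq_tsum_geomWeight_mul hg'0 hg'1 hH).symm

lemma mul_pow_le_mul_pow_of_le {q i k : ℕ} (hq : 2 ≤ q) (hi : 1 ≤ i) (hik : i ≤ k) :
    k * q ^ i ≤ i * q ^ k := by
  induction k, hik using Nat.le_induction with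
  | base => rfl
  | succ k hik ih =>
    calc (k + 1) * q ^ i ≤ q * (k * q ^ i) := by
          rw [← mul_assoc]
          exact Nat.mul_le_mul_right _ (by nlinarith)
      _ ≤ q * (i * q ^ k) := Nat.mul_le_mul_left _ ih
      _ = i * q ^ (k + 1) := by ring

lemma pow_div_pow_le_div {q i k : ℕ} (hq : 2 ≤ q) (hi : 1 ≤ i) (hik : i ≤ k) :
    (q : ℝ) ^ i / (q : ℝ) ^ k ≤ i / k := by
  have hq0 : (0 : ℝ) < q := by positivity
  rw [div_le_div_iff₀ (by positivity) (by exact_mod_cast hi.trans hik), mul_comm]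
  exact_mod_cast mul_pow_le_mul_pow_of_le hq hi hik

lemma cacheIndex_mono {k : ℕ} : Monotone (cacheIndex k) := fun v w hvw i => by
  unfold cacheIndex
  gcongr with j
  exact hvw j

theorem stmt12_general (q k : ℕ) (hq : 2 ≤ q)
    (F : (Fin k → ℝ) → ℝ)
    (hFbdd : ∃ C : ℝ, ∀ v, |F v| ≤ C)
    (hFmono : ∀ v w : Fin k → ℝ, (∀ i, v i ≤ w i) → F v ≤ F w) :
    (∑' w : Fin (k - 1) → ℕ,
        (∏ j : Fin (k - 1), (1 - (q : ℝ) ^ ((j : ℕ) + 1) / (q : ℝ) ^ k)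
            * ((q : ℝ) ^ ((j : ℕ) + 1) / (q : ℝ) ^ k) ^ (w j)) * F (cacheIndex k w))
      ≤ ∑' w : Fin (k - 1) → ℕ,
        (∏ j : Fin (k - 1), (1 - (((j : ℕ) : ℝ) + 1) / (k : ℝ))
            * ((((j : ℕ) : ℝ) + 1) / (k : ℝ)) ^ (w j)) * F (cacheIndex k w) := by
  obtain ⟨C, hC⟩ := hFbdd
  have hjk (j : Fin (k - 1)) : (j : ℕ) + 1 < k := by omega
  have hcoded_le (j : Fin (k - 1)) :
      (q : ℝ) ^ ((j : ℕ) + 1) / (q : ℝ) ^ k ≤ (((j : ℕ) : ℝ) + 1) / (k : ℝ) := by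
    exact_mod_cast pow_div_pow_le_div hq (Nat.succ_pos j) (hjk j).le
  have huncoded_lt (j : Fin (k - 1)) : (((j : ℕ) : ℝ) + 1) / (k : ℝ) < 1 := by
    rw [div_lt_one (by exact_mod_cast (Nat.succ_pos j).trans (hjk j))]
    exact_mod_cast hjk j
  exact tsum_prodGeomWeight_mul_le_of_le (fun j => by positivity) hcoded_le huncoded_lt
    (fun w => hC (cacheIndex k w)) ((show Monotone F from hFmono).comp cacheIndex_mono)

/-- `I^c ≤_st I^p`: for independent geometric increments with parameters
`g_i = q^(i-1)/q^k` (coded) and `g̃_i = (i-1)/k` (uncoded), the expectation of every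
bounded coordinatewise-increasing `F` of the coded index vector is at most that of the
uncoded index vector. Expectations are written as sums over the increment vector
`w : Fin (k-1) → ℕ`, where increment `i = j + 2` takes value `w j + 1` with probability
`(1 - g_i) g_i^(w j)`. -/
theorem stmt12 (q k : ℕ) (hq : 2 ≤ q) (hk : 1 ≤ k)
    (F : (Fin k → ℝ) → ℝ)
    (hFbdd : ∃ C : ℝ, ∀ v, |F v| ≤ C)
    (hFmono : ∀ v w : Fin k → ℝ, (∀ i, v i ≤ w i) → F v ≤ F w) :
    (∑' w : Fin (k - 1) → ℕ,
        (∏ j : Fin (k - 1), (1 - (q : ℝ) ^ ((j : ℕ) + 1) / (q : ℝ) ^ k)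
            * ((q : ℝ) ^ ((j : ℕ) + 1) / (q : ℝ) ^ k) ^ (w j)) * F (cacheIndex k w))
      ≤ ∑' w : Fin (k - 1) → ℕ,
        (∏ j : Fin (k - 1), (1 - (((j : ℕ) : ℝ) + 1) / (k : ℝ))
            * ((((j : ℕ) : ℝ) + 1) / (k : ℝ)) ^ (w j)) * F (cacheIndex k w) :=
  stmt12_general q k hq F hFbdd hFmono
end

section
/- For a homogeneous Poisson process of intensity λ > 0 in the plane with k message parts allocated uniformly (so each part forms a thinned Poisson process of intensity λ/k), the limiting expected costs as δ_max → ∞ are W̄^p = k·(k/(λπ))^{a/2}·Γ(1 + a/2) for the uncoded strategy and W̄^c_min = Γ(k + 1 + a/2) / ((1 + a/2)(λπ)^{a/2} Γ(k)) for the coded strategy, for any a > 0. -/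
open Real MeasureTheory Set Finset
open scoped Nat

/-! The substitution `u = c x²` turns every moment `∫ x^s e^{-c x²}` into a Gamma integral,
so `E[D_i^a] = c^{-a/2} Γ(i + a/2) / Γ(i)` when `D_i` has density
`2 c^i δ^{2i-1} e^{-cδ²} / Γ(i)`; the uncoded cost is the case `i = 1`, `c = λπ/k`.
For the coded cost, `Γ(i + 1 + s) = (i + s) Γ(i + s)` makes
`∑_{i ≤ k} Γ(i + s) / Γ(i) = Γ(k + 1 + s) / ((1 + s) Γ(k))` a one-step induction. -/

theorem integral_rpow_mul_exp_neg_mul_sq {c s : ℝ} (hc : 0 < c) (hs : -1 < s) :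
    ∫ x in Ioi (0:ℝ), x ^ s * exp (-(c * x ^ 2))
      = c ^ (-(s + 1) / 2) / 2 * Gamma ((s + 1) / 2) := by
  rw [div_eq_mul_one_div _ (2:ℝ), ← integral_rpow_mul_exp_neg_mul_rpow two_pos hs hc]
  refine setIntegral_congr_fun measurableSet_Ioi fun x _ => ?_
  rw [rpow_two, neg_mul]

theorem integral_rpow_mul_nthNeighborDensity {c : ℝ} (hc : 0 < c) {i : ℕ} (hi : 1 ≤ i) {a : ℝ}
    (ha : -(2 * i : ℝ) < a) :
    ∫ δ in Ioi (0:ℝ), δ ^ a * (2 * c ^ i * δ ^ (2 * i - 1) * exp (-(c * δ ^ 2)) / ((i - 1)! : ℝ))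
      = c ^ (-(a / 2)) * (Gamma (i + a / 2) / ((i - 1)! : ℝ)) := by
  have hexp : ((2 * i - 1 : ℕ) : ℝ) = 2 * i - 1 := by
    rw [Nat.cast_sub (by omega)]; push_cast; ring
  have hmerge : ∀ δ ∈ Ioi (0:ℝ),
      δ ^ a * (2 * c ^ i * δ ^ (2 * i - 1) * exp (-(c * δ ^ 2)) / ((i - 1)! : ℝ))
        = 2 * c ^ i / ((i - 1)! : ℝ) * (δ ^ (a + 2 * i - 1) * exp (-(c * δ ^ 2))) := fun δ hδ => by
    rw [add_sub_assoc, rpow_add hδ, ← hexp, rpow_natCast]; ring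
  rw [setIntegral_congr_fun measurableSet_Ioi hmerge, integral_const_mul,
    integral_rpow_mul_exp_neg_mul_sq hc (by linarith),
    show (a + 2 * i - 1 + 1) / 2 = i + a / 2 by ring]
  have hpow : c ^ i * c ^ (-(a + 2 * i - 1 + 1) / 2) = c ^ (-(a / 2)) := by
    rw [← rpow_natCast, ← rpow_add hc]; congr 1; ring
  rw [← hpow]
  ring

theorem sum_Icc_Gamma_add_div_factorial {s : ℝ} (hs : -1 < s) {k : ℕ} (hk : 1 ≤ k) :
    ∑ i ∈ Icc 1 k, Gamma (i + s) / ((i - 1)! : ℝ)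
      = Gamma (k + 1 + s) / ((1 + s) * ((k - 1)! : ℝ)) := by
  have hs1 : 1 + s ≠ 0 := by linarith
  induction k, hk using Nat.le_induction with
  | base =>
    rw [Nat.cast_one, add_right_comm, Gamma_add_one hs1]
    simp [hs1]
  | succ k hk ih =>
    have hfac : (k ! : ℝ) = k * (k - 1)! := by
      rw [← Nat.cast_mul, Nat.mul_factorial_pred (by omega)]
    have hk0 : (k : ℝ) ≠ 0 := by positivity
    rw [sum_Icc_succ_top (by omega), ih, Nat.add_sub_cancel, hfac]
    push_cast
    rw [show (k + 1 + 1 + s : ℝ) = (k + 1 + s) + 1 by ring, Gamma_add_one (by linarith)]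
    field_simp
    ring

/-- Limiting expected costs as `δ_max → ∞`:
`W̄^p = k E[D₁^a]`, the nearest neighbor in the thinned process of intensity `λ/k`
(density `δ ↦ 2 (λ/k) π δ e^(-(λ/k)πδ²)`), equals `k (k/(λπ))^(a/2) Γ(1 + a/2)`;
`W̄^c_min = ∑_{i=1}^k E[D_i^a]`, with `D_i` the `i`-th nearest neighbor of the full process
(density `δ ↦ 2 (λπ)^i δ^(2i-1) e^(-λπδ²)/Γ(i)`), equals
`Γ(k + 1 + a/2)/((1 + a/2)(λπ)^(a/2) Γ(k))`. -/
theorem stmt15 (lam : ℝ) (hlam : 0 < lam) (k : ℕ) (hk : 1 ≤ k) (a : ℝ) (ha : 0 < a) :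
    ((k : ℝ) * ∫ δ in Set.Ioi (0:ℝ),
        δ ^ a * (2 * (lam / k * Real.pi) * δ * Real.exp (-(lam / k * Real.pi * δ ^ 2)))
      = (k : ℝ) * ((k : ℝ) / (lam * Real.pi)) ^ (a / 2) * Real.Gamma (1 + a / 2))
    ∧ (∑ i ∈ Finset.Icc 1 k, ∫ δ in Set.Ioi (0:ℝ),
        δ ^ a * (2 * (lam * Real.pi) ^ i * δ ^ (2 * i - 1)
          * Real.exp (-(lam * Real.pi * δ ^ 2)) / (Nat.factorial (i - 1) : ℝ))
      = Real.Gamma ((k : ℝ) + 1 + a / 2)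
          / ((1 + a / 2) * (lam * Real.pi) ^ (a / 2) * (Nat.factorial (k - 1) : ℝ))) := by
  have hk0 : (0 : ℝ) < k := by exact_mod_cast hk
  constructor
  · have hc : 0 < lam / k * π := by positivity
    have hnearest := integral_rpow_mul_nthNeighborDensity hc le_rfl (a := a) (by linarith)
    norm_num at hnearest
    rw [hnearest, rpow_neg hc.le, ← inv_rpow hc.le,
      show (lam / k * π)⁻¹ = k / (lam * π) by field_simp]
    ring
  · have hc : 0 < lam * π := by positivity
    rw [sum_congr rfl fun i hi => integral_rpow_mul_nthNeighborDensity hc (mem_Icc.1 hi).1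
      (by linarith [i.cast_nonneg (α := ℝ)]), ← mul_sum,
      sum_Icc_Gamma_add_div_factorial (by linarith) hk, rpow_neg hc.le]
    field_simp
end

section
/- For fixed real b = 1 + a/2 > 1, the function k ↦ b·k^b·B(k, b) (with B the Beta function) is increasing in k on the positive integers (indeed on positive reals), and its limit as k → ∞ equals b·Γ(b) = (a/2 + 1)·Γ(a/2 + 1). -/
/-!
Write `φ(x) = x^b Γ(x) / Γ(x + b)`. By the logarithmic form of Euler's limit formula, `log φ(x)`
is the limit of `b log x + ∑_{m ≤ n} (log (x + m + b) - log (x + m)) - b log n`. Telescoping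
against `∑_{m ≤ n} (log (x + m + 1) - log (x + m))` turns the partial sum into
`b log (x + n + 1)` plus values at the points `x + m` of
`u ↦ log (u + b) - log u - b (log (u + 1) - log u)`, a function with derivative
`b (b - 1) / (u (u + 1) (u + b)) ≥ 0` when `b ≥ 1`; hence `φ` is increasing. At the integers
`φ(n) = GammaSeq b n / Γ(b) · (1 + b / n) → 1`, and monotonicity carries this limit to the
reals. Finally `b k^b B(k, b) = b Γ(b) φ(k)`.
-/

open Real Filter Set Topology

namespace Real

variable {b : ℝ}

lemma monotoneOn_log_add_sub_log_sub_mul_log_add_one_sub_log (hb : 1 ≤ b) :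
    MonotoneOn (fun u => log (u + b) - log u - b * (log (u + 1) - log u)) (Ioi 0) := by
  have hderiv : ∀ u ∈ Ioi (0 : ℝ), HasDerivAt
      (fun u => log (u + b) - log u - b * (log (u + 1) - log u))
      ((u + b)⁻¹ - u⁻¹ - b * ((u + 1)⁻¹ - u⁻¹)) u := by
    intro u (hu : 0 < u)
    have hlog := hasDerivAt_log hu.ne'
    refine (((((hasDerivAt_id u).add_const b).log (by positivity)).sub hlog).sub
      (((((hasDerivAt_id u).add_const 1).log (by positivity)).sub hlog).const_mul b)).congr_deriv
      ?_
    simp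
  refine monotoneOn_of_deriv_nonneg (convex_Ioi 0)
    (fun u hu => (hderiv u hu).continuousAt.continuousWithinAt)
    (fun u hu => (hderiv u (interior_subset hu)).differentiableAt.differentiableWithinAt)
    fun u hu => ?_
  rw [interior_Ioi] at hu
  have hu : 0 < u := hu
  rw [(hderiv u hu).deriv]
  have key : (u + b)⁻¹ - u⁻¹ - b * ((u + 1)⁻¹ - u⁻¹)
      = b * (b - 1) / (u * (u + 1) * (u + b)) := by
    field_simp
    ring
  rw [key]
  have : 0 ≤ b - 1 := by linarith
  positivity

lemma mul_log_add_sum_log_add_sub_log (x : ℝ) (n : ℕ) :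
    b * log x + ∑ m ∈ Finset.range n, (log (x + m + b) - log (x + m))
      = ∑ m ∈ Finset.range n,
          (log (x + m + b) - log (x + m) - b * (log (x + m + 1) - log (x + m)))
        + b * log (x + n) := by
  have htel : ∑ m ∈ Finset.range n, (log (x + m + 1) - log (x + m)) = log (x + n) - log x := by
    simpa [add_assoc] using Finset.sum_range_sub (fun m : ℕ => log (x + m)) n
  rw [Finset.sum_sub_distrib (f := fun m : ℕ => log (x + m + b) - log (x + m)),
    ← Finset.mul_sum, htel]
  ring

lemma monotoneOn_mul_log_add_sum_log_add_sub_log (hb : 1 ≤ b) (n : ℕ) :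
    MonotoneOn (fun x => b * log x + ∑ m ∈ Finset.range n, (log (x + m + b) - log (x + m)))
      (Ioi 0) := by
  intro x (hx : 0 < x) y (hy : 0 < y) hxy
  simp only [mul_log_add_sum_log_add_sub_log]
  refine add_le_add (Finset.sum_le_sum fun m _ => ?_)
    (mul_le_mul_of_nonneg_left (log_le_log (by positivity) (by linarith)) (by linarith))
  exact monotoneOn_log_add_sub_log_sub_mul_log_add_one_sub_log hb
    (show 0 < x + m by positivity) (show 0 < y + m by positivity) (by linarith)

lemma tendsto_mul_log_add_sum_log_add_sub_log_sub_mul_log {x : ℝ} (hx : 0 < x)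
    (hxb : 0 < x + b) :
    Tendsto (fun n : ℕ =>
        b * log x + ∑ m ∈ Finset.range (n + 1), (log (x + m + b) - log (x + m)) - b * log n)
      atTop (𝓝 (b * log x + log (Gamma x) - log (Gamma (x + b)))) := by
  have := ((BohrMollerup.tendsto_log_gamma hx).sub
    (BohrMollerup.tendsto_log_gamma hxb)).const_add (b * log x)
  rw [add_sub_assoc]
  refine this.congr fun n => ?_
  simp only [BohrMollerup.logGammaSeq, Finset.sum_sub_distrib, add_right_comm x b]
  ring

lemma monotoneOn_mul_log_add_log_Gamma_sub_log_Gamma_add (hb : 1 ≤ b) :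
    MonotoneOn (fun x => b * log x + log (Gamma x) - log (Gamma (x + b))) (Ioi 0) := by
  intro x (hx : 0 < x) y (hy : 0 < y) hxy
  exact le_of_tendsto_of_tendsto'
    (tendsto_mul_log_add_sum_log_add_sub_log_sub_mul_log hx (by linarith))
    (tendsto_mul_log_add_sum_log_add_sub_log_sub_mul_log hy (by linarith))
    fun n => sub_le_sub_right (monotoneOn_mul_log_add_sum_log_add_sub_log hb (n + 1) hx hy hxy) _

theorem monotoneOn_rpow_mul_Gamma_div_Gamma_add (hb : 1 ≤ b) :
    MonotoneOn (fun x => x ^ b * Gamma x / Gamma (x + b)) (Ioi 0) := by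
  have hexp : ∀ x ∈ Ioi (0 : ℝ), x ^ b * Gamma x / Gamma (x + b)
      = exp (b * log x + log (Gamma x) - log (Gamma (x + b))) := by
    intro x (hx : 0 < x)
    rw [exp_sub, exp_add, exp_log (Gamma_pos_of_pos hx),
      exp_log (Gamma_pos_of_pos (by linarith)), rpow_def_of_pos hx, mul_comm (log x)]
  intro x hx y hy hxy
  dsimp only
  rw [hexp x hx, hexp y hy]
  exact exp_le_exp.mpr (monotoneOn_mul_log_add_log_Gamma_sub_log_Gamma_add hb hx hy hxy)

lemma Gamma_add_nat_eq_prod_mul {s : ℝ} (hs : 0 < s) (n : ℕ) :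
    Gamma (s + n) = (∏ j ∈ Finset.range n, (s + j)) * Gamma s := by
  induction n with
  | zero => simp
  | succ n ih =>
    rw [Nat.cast_succ, ← add_assoc, Gamma_add_one (by positivity), ih, Finset.prod_range_succ]
    ring

lemma tendsto_natCast_rpow_mul_Gamma_div_Gamma_add (hb : 0 < b) :
    Tendsto (fun n : ℕ => (n : ℝ) ^ b * Gamma n / Gamma (n + b)) atTop (𝓝 1) := by
  have hGb := Gamma_pos_of_pos hb
  have heq : ∀ᶠ n : ℕ in atTop,
      GammaSeq b n / Gamma b * (1 + b / n) = (n : ℝ) ^ b * Gamma n / Gamma (n + b) := by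
    filter_upwards [eventually_ne_atTop 0] with n hn
    have hn : (0 : ℝ) < n := by positivity
    have hfac : (n.factorial : ℝ) = n * Gamma n := by
      rw [← Gamma_nat_eq_factorial, Gamma_add_one hn.ne']
    have hprod : (∏ j ∈ Finset.range (n + 1), (b + j)) * Gamma b = (n + b) * Gamma (n + b) := by
      rw [← Gamma_add_nat_eq_prod_mul hb, ← Gamma_add_one (by positivity)]
      push_cast
      ring_nf
    rw [GammaSeq, hfac, div_div, hprod]
    field_simp
  have hlim := ((GammaSeq_tendsto_Gamma b).div_const (Gamma b)).mul
    ((tendsto_const_div_atTop_nhds_zero_nat b).const_add 1)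
  rw [div_self hGb.ne', add_zero, mul_one] at hlim
  exact hlim.congr' heq

lemma _root_.MonotoneOn.tendsto_atTop_of_tendsto_natCast {f : ℝ → ℝ} {L : ℝ}
    (hf : MonotoneOn f (Ici 1)) (h : Tendsto (fun n : ℕ => f n) atTop (𝓝 L)) :
    Tendsto f atTop (𝓝 L) := by
  refine tendsto_of_tendsto_of_tendsto_of_le_of_le' (h.comp tendsto_nat_floor_atTop)
    tendsto_const_nhds ?_ ?_
  · filter_upwards [eventually_ge_atTop 1] with x hx
    have hfloor : (1 : ℝ) ≤ ⌊x⌋₊ := by exact_mod_cast Nat.le_floor (by simpa using hx)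
    exact hf hfloor hx (Nat.floor_le (by linarith))
  · filter_upwards [eventually_ge_atTop 1] with x hx
    refine ge_of_tendsto h ?_
    filter_upwards [tendsto_natCast_atTop_atTop.eventually_ge_atTop x] with n hn
    exact hf hx (hx.trans hn) hn

theorem tendsto_rpow_mul_Gamma_div_Gamma_add_atTop (hb : 1 ≤ b) :
    Tendsto (fun x => x ^ b * Gamma x / Gamma (x + b)) atTop (𝓝 1) :=
  ((monotoneOn_rpow_mul_Gamma_div_Gamma_add hb).mono (Ici_subset_Ioi.2 zero_lt_one))
    |>.tendsto_atTop_of_tendsto_natCast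
      (tendsto_natCast_rpow_mul_Gamma_div_Gamma_add (by linarith))

end Real

/-- For `b = 1 + a/2 > 1` the map `k ↦ b k^b B(k, b)`, with
`B(k,b) = Γ(k)Γ(b)/Γ(k+b)`, is increasing on the positive reals and tends to
`b Γ(b) = (a/2 + 1) Γ(a/2 + 1)` as `k → ∞`. -/
theorem stmt17 (a : ℝ) (ha : 0 < a) :
    (∀ x y : ℝ, 0 < x → x ≤ y →
        (1 + a / 2) * x ^ (1 + a / 2)
            * (Real.Gamma x * Real.Gamma (1 + a / 2) / Real.Gamma (x + (1 + a / 2)))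
          ≤ (1 + a / 2) * y ^ (1 + a / 2)
            * (Real.Gamma y * Real.Gamma (1 + a / 2) / Real.Gamma (y + (1 + a / 2))))
    ∧ Filter.Tendsto
        (fun x : ℝ => (1 + a / 2) * x ^ (1 + a / 2)
            * (Real.Gamma x * Real.Gamma (1 + a / 2) / Real.Gamma (x + (1 + a / 2))))
        Filter.atTop (nhds ((a / 2 + 1) * Real.Gamma (a / 2 + 1))) := by
  have hb : 1 ≤ 1 + a / 2 := by linarith
  set b : ℝ := 1 + a / 2
  have hbGb : 0 < b * Gamma b := mul_pos (by linarith) (Gamma_pos_of_pos (by linarith))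
  have hfactor : ∀ x, b * x ^ b * (Gamma x * Gamma b / Gamma (x + b))
      = b * Gamma b * (x ^ b * Gamma x / Gamma (x + b)) := fun x => by ring
  simp only [hfactor, show a / 2 + 1 = b by ring]
  refine ⟨fun x y hx hxy => mul_le_mul_of_nonneg_left
    (monotoneOn_rpow_mul_Gamma_div_Gamma_add hb hx (hx.trans_le hxy) hxy) hbGb.le, ?_⟩
  simpa using (tendsto_rpow_mul_Gamma_div_Gamma_add_atTop hb).const_mul (b * Gamma b)
end

section
/- Let caches form a homogeneous Poisson process of intensity λ > 0 in the plane and let r > 0. Under the uncoded strategy with k parts (each part forming an independent thinned Poisson process of intensity λ/k), the cache miss probability is F^p = 1 - (1 - e^{-λπr²/k})^k, while under the coded strategy it is F^c_min = Γ(k, λπr²)/Γ(k). Moreover F^c_min ≤ F^p for all k ≥ 1. -/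
/-!
The coded miss probability is the Poisson(μ) lower tail `e^{-μ} ∑_{i<k} μ^i/i!`, and this is
`Γ(k, μ)/(k-1)!` because `-(k-1)! e^{-z} ∑_{i<k} z^i/i!` is an antiderivative of `z^{k-1} e^{-z}`.

For the comparison with the uncoded strategy, a Poisson(kt) count is the sum of `k` independent
Poisson(t) counts, and if all of them are positive the sum is at least `k`. Analytically this is
`(e^t - 1)^k + ∑_{i<k} (kt)^i/i! ≤ e^{kt}`, proved by induction on `k` from the truncated
addition formula `∑_{m≤n} (x+y)^m/m! ≤ e^y ∑_{i<n} x^i/i! + x^n/n!`.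
-/

open Real MeasureTheory Set Finset

open Filter Topology Nat

noncomputable def expPartialSum (n : ℕ) (x : ℝ) : ℝ := ∑ i ∈ range n, x ^ i / i !

lemma expPartialSum_succ (n : ℕ) (x : ℝ) :
    expPartialSum (n + 1) x = expPartialSum n x + x ^ n / n ! :=
  sum_range_succ _ _

lemma expPartialSum_le_exp {x : ℝ} (hx : 0 ≤ x) (n : ℕ) : expPartialSum n x ≤ exp x :=
  sum_le_exp_of_nonneg hx n

lemma hasDerivAt_expPartialSum_succ (n : ℕ) (x : ℝ) :
    HasDerivAt (expPartialSum (n + 1)) (expPartialSum n x) x := by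
  induction n with
  | zero =>
    have h1 : expPartialSum 1 = fun _ => 1 := funext fun y => by simp [expPartialSum]
    simpa [h1, expPartialSum] using hasDerivAt_const x (1 : ℝ)
  | succ n ih =>
    have hpow : HasDerivAt (fun y : ℝ => y ^ (n + 1) / (n + 1)!) (x ^ n / n !) x := by
      refine ((hasDerivAt_pow (n + 1) x).div_const ((n + 1)! : ℝ)).congr_deriv ?_
      rw [factorial_succ, cast_mul]
      field_simp
      push_cast
      ring
    rw [funext (expPartialSum_succ (n + 1)), expPartialSum_succ]
    exact ih.add hpow

lemma hasDerivAt_neg_factorial_mul_exp_neg_mul_expPartialSum (n : ℕ) (x : ℝ) :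
    HasDerivAt (fun y => -(n ! * (exp (-y) * expPartialSum (n + 1) y))) (x ^ n * exp (-x)) x := by
  refine ((((hasDerivAt_neg x).exp).mul (hasDerivAt_expPartialSum_succ n x)).const_mul
    (n ! : ℝ)).neg.congr_deriv ?_
  rw [expPartialSum_succ]
  field_simp
  ring

lemma tendsto_exp_neg_mul_expPartialSum_atTop (n : ℕ) :
    Tendsto (fun y => exp (-y) * expPartialSum n y) atTop (𝓝 0) := by
  have h := tendsto_finsetSum (range n) fun i _ =>
    (tendsto_pow_mul_exp_neg_atTop_nhds_zero i).div_const (i ! : ℝ)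
  simp only [zero_div, sum_const_zero] at h
  refine h.congr fun y => ?_
  simp only [expPartialSum, mul_sum]
  exact sum_congr rfl fun i _ => by ring

lemma integrableOn_Ioi_rpow_mul_exp_neg {s x : ℝ} (hs : 0 < s) (hx : 0 ≤ x) :
    IntegrableOn (fun z => z ^ (s - 1) * exp (-z)) (Ioi x) :=
  ((GammaIntegral_convergent hs).mono_set (Ioi_subset_Ioi hx)).congr_fun
    (fun _ _ => mul_comm _ _) measurableSet_Ioi

lemma uGamma_natCast_add_one (n : ℕ) {x : ℝ} (hx : 0 ≤ x) :
    uGamma (n + 1) x = n ! * (exp (-x) * expPartialSum (n + 1) x) := by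
  have hint := integrableOn_Ioi_rpow_mul_exp_neg (s := n + 1) (by positivity) hx
  simp only [add_sub_cancel_right, rpow_natCast] at hint
  rw [uGamma, add_sub_cancel_right]
  simp only [rpow_natCast]
  rw [integral_Ioi_of_hasDerivAt_of_tendsto
    (hasDerivAt_neg_factorial_mul_exp_neg_mul_expPartialSum n x).continuousAt.continuousWithinAt
    (fun y _ => hasDerivAt_neg_factorial_mul_exp_neg_mul_expPartialSum n y) hint
    (by simpa using ((tendsto_exp_neg_mul_expPartialSum_atTop (n + 1)).const_mul (n ! : ℝ)).neg)]
  ring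

lemma add_pow_div_factorial (x y : ℝ) (m : ℕ) :
    (x + y) ^ m / m ! = ∑ i ∈ range (m + 1), x ^ i / i ! * (y ^ (m - i) / (m - i)!) := by
  rw [add_pow, sum_div]
  refine sum_congr rfl fun i hi => ?_
  rw [cast_choose ℝ (le_of_lt_succ (mem_range.1 hi))]
  field_simp

lemma expPartialSum_add (n : ℕ) (x y : ℝ) :
    expPartialSum n (x + y) = ∑ i ∈ range n, x ^ i / i ! * expPartialSum (n - i) y := by
  simp only [expPartialSum, add_pow_div_factorial, mul_sum]
  exact sum_range_diag_flip n fun i j => x ^ i / i ! * (y ^ j / j !)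

lemma expPartialSum_succ_add_le {x y : ℝ} (hx : 0 ≤ x) (hy : 0 ≤ y) (n : ℕ) :
    expPartialSum (n + 1) (x + y) ≤ exp y * expPartialSum n x + x ^ n / n ! := by
  have hone : expPartialSum 1 y = 1 := by simp [expPartialSum]
  rw [expPartialSum_add, sum_range_succ, Nat.add_sub_cancel_left, hone, mul_one]
  gcongr ?_ + _
  rw [expPartialSum, mul_sum]
  refine sum_le_sum fun i _ => ?_
  rw [mul_comm]
  gcongr
  exact expPartialSum_le_exp hy _

lemma exp_sub_one_pow_add_expPartialSum_le {t : ℝ} (ht : 0 ≤ t) (k : ℕ) :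
    (exp t - 1) ^ k + expPartialSum k (k * t) ≤ exp (k * t) := by
  induction k with
  | zero => simp [expPartialSum]
  | succ k ih =>
    have hkt : 0 ≤ (k : ℝ) * t := by positivity
    have hsplit := expPartialSum_succ_add_le hkt ht k
    have hstep : (exp t - 1) ^ (k + 1) ≤ (exp (k * t) - expPartialSum k (k * t)) * (exp t - 1) :=
      pow_succ (exp t - 1) k ▸ mul_le_mul_of_nonneg_right (by linarith)
        (sub_nonneg.2 (one_le_exp ht))
    have htail := expPartialSum_le_exp hkt (k + 1)
    rw [expPartialSum_succ] at htail
    rw [cast_succ, add_mul, one_mul, exp_add]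
    nlinarith

lemma exp_neg_mul_expPartialSum_le {μ : ℝ} (hμ : 0 ≤ μ) (k : ℕ) :
    exp (-μ) * expPartialSum k μ ≤ 1 - (1 - exp (-μ / k)) ^ k := by
  rcases eq_or_ne k 0 with rfl | hk
  · simp [expPartialSum]
  set t := μ / k
  have hμk : k * t = μ := mul_div_cancel₀ μ (cast_ne_zero.2 hk)
  have h := exp_sub_one_pow_add_expPartialSum_le (div_nonneg hμ k.cast_nonneg) k
  have hpow : (1 - exp (-t)) ^ k = exp (-μ) * (exp t - 1) ^ k := by
    rw [← hμk, neg_mul_eq_mul_neg, exp_nat_mul, ← mul_pow, mul_sub, ← exp_add, neg_add_cancel,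
      exp_zero, mul_one]
  have hμ1 : exp (-μ) * exp μ = 1 := by rw [← exp_add, neg_add_cancel, exp_zero]
  rw [neg_div, hpow]
  rw [hμk] at h
  nlinarith [mul_le_mul_of_nonneg_left h (exp_pos (-μ)).le]

theorem stmt19_general (lam r : ℝ) (hlam : 0 < lam) (k : ℕ) (hk : 1 ≤ k) :
    (Real.exp (-(lam * Real.pi * r ^ 2))
        * ∑ i ∈ Finset.range k, (lam * Real.pi * r ^ 2) ^ i / (Nat.factorial i : ℝ)
      = uGamma k (lam * Real.pi * r ^ 2) / (Nat.factorial (k - 1) : ℝ))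
    ∧ uGamma k (lam * Real.pi * r ^ 2) / (Nat.factorial (k - 1) : ℝ)
        ≤ 1 - (1 - Real.exp (-(lam * Real.pi * r ^ 2) / k)) ^ k := by
  obtain ⟨n, rfl⟩ : ∃ n, k = n + 1 := ⟨k - 1, by omega⟩
  have hμ : 0 ≤ lam * π * r ^ 2 := by positivity
  have hcoded : exp (-(lam * π * r ^ 2)) * expPartialSum (n + 1) (lam * π * r ^ 2)
      = uGamma ↑(n + 1) (lam * π * r ^ 2) / ↑(n + 1 - 1)! := by
    rw [cast_succ, uGamma_natCast_add_one n hμ, Nat.add_sub_cancel]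
    field_simp
  exact ⟨hcoded, hcoded ▸ exp_neg_mul_expPartialSum_le hμ (n + 1)⟩

/-- For a planar HPP of intensity `λ` and range `r`: with `μ = λπr²`, the coded cache miss
probability `P(fewer than k points in the disc) = e^(-μ) ∑_{i<k} μ^i/i!` equals
`Γ(k, μ)/Γ(k)`, and it is at most the uncoded miss probability
`F^p = 1 - (1 - e^(-μ/k))^k`. -/
theorem stmt19 (lam r : ℝ) (hlam : 0 < lam) (hr : 0 < r) (k : ℕ) (hk : 1 ≤ k) :
    (Real.exp (-(lam * Real.pi * r ^ 2))
        * ∑ i ∈ Finset.range k, (lam * Real.pi * r ^ 2) ^ i / (Nat.factorial i : ℝ)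
      = uGamma k (lam * Real.pi * r ^ 2) / (Nat.factorial (k - 1) : ℝ))
    ∧ uGamma k (lam * Real.pi * r ^ 2) / (Nat.factorial (k - 1) : ℝ)
        ≤ 1 - (1 - Real.exp (-(lam * Real.pi * r ^ 2) / k)) ^ k :=
  stmt19_general lam r hlam k hk
end
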